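/- arXiv:1808.01885 — 3 statements merged into one kernel-verified Lean document; each statement's English description precedes it below -/
import Mathlib

section
/- Let $\Lambda(\cdot) = \sum_\alpha K_\alpha (\cdot) K_\alpha^\dagger$ be a CPTP map with strictly incoherent Kraus operators $K_\alpha = \sum_x c_{\alpha,x} |f_\alpha(x)\rangle\langle x|$ where each $f_\alpha$ is a permutation of $\{1,\dots,d\}$. Let $\Psi_M$ be the maximally coherent projection on the first $M$ basis vectors and $\Pi_{>M} = \frac{1}{M}\sum_{x=M+1}^{d} |x\rangle\langle x|$. Then the operator $A = \Lambda^*(\Psi_M) + \Lambda^*(\Pi_{>M})$ satisfies: (i) $0 \leq A \leq \mathbb{1}$; (ii) $\langle y | A | y \rangle = 1/M$ for all $y$; and (iii) $A$ admits a decomposition $A = \frac{1}{M}\sum_j |\phi_j\rangle\langle\phi_j|$ into vectors $|\phi_j\rangle$ each supported on at most $M$ computational basis elements. -/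
open Matrix ComplexOrder

/-- Kraus operator `K_α = ∑_x c_{α,x} |f_α(x)⟩⟨x|` of a strictly incoherent operation. -/
noncomputable def sioKraus {d : ℕ} (f : Equiv.Perm (Fin d)) (c : Fin d → ℂ) :
    Matrix (Fin d) (Fin d) ℂ :=
  Matrix.of fun i j => if i = f j then c j else 0

/-- The maximally coherent projector `Ψ_M` on the first `M` basis vectors of `ℂ^d`. -/
noncomputable def PsiM (d M : ℕ) : Matrix (Fin d) (Fin d) ℂ :=
  Matrix.of fun i j => if i.val < M ∧ j.val < M then (1 : ℂ) / M else 0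

/-- `Π_{>M} = (1/M) ∑_{x > M} |x⟩⟨x|`. -/
noncomputable def PiGtM (d M : ℕ) : Matrix (Fin d) (Fin d) ℂ :=
  Matrix.of fun i j => if i = j ∧ M ≤ i.val then (1 : ℂ) / M else 0

/-
Strictly incoherent Kraus operators only permute and rescale coordinates, so
`K† |w⟩⟨w| K = |K† w⟩⟨K† w|` with `K† w` supported on at most as many basis vectors as `w`.
Decomposing `B = Ψ_M + Π_{>M} = (1/M) (|u⟩⟨u| + ∑_{x ≥ M} |x⟩⟨x|)`, with `u` the indicator
of the first `M` basis vectors, therefore gives (iii) and `A ≥ 0`. Since `Ψ_M + M Π_{>M}` is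
an orthogonal projection, `1 - B ≥ 0`, and trace preservation turns this into
`1 - A = ∑ K† (1 - B) K ≥ 0`. Finally `B` has constant diagonal `1/M`, and the diagonal of
`K† B K` weights it by `|c_{α,y}|²`, which sum to one.
-/

open Finset

section KrausConjugation

variable {n ι R : Type*} [Fintype n] [Fintype ι]

theorem Matrix.one_sub_sum_conjTranspose_mul_mul [DecidableEq n] [Ring R] [StarRing R]
    (K : ι → Matrix n n R) (hK : ∑ α, (K α)ᴴ * K α = 1) (B : Matrix n n R) :
    1 - ∑ α, (K α)ᴴ * B * K α = ∑ α, (K α)ᴴ * (1 - B) * K α := by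
  simp only [Matrix.mul_sub, Matrix.sub_mul, Matrix.mul_one, Finset.sum_sub_distrib, hK]

theorem Matrix.conjTranspose_mul_vecMulVec_mul [Ring R] [StarRing R] (K : Matrix n n R)
    (u : n → R) :
    Kᴴ * vecMulVec u (star u) * K = vecMulVec (Kᴴ *ᵥ u) (star (Kᴴ *ᵥ u)) := by
  rw [mul_vecMulVec, vecMulVec_mul, star_mulVec, conjTranspose_conjTranspose]

theorem Matrix.sum_conjTranspose_mul_smul_sum_vecMulVec_mul {κ : Type*} [Fintype κ]
    [CommRing R] [StarRing R] (K : ι → Matrix n n R) (a : R) (w : κ → n → R) :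
    ∑ α, (K α)ᴴ * (a • ∑ k, vecMulVec (w k) (star (w k))) * K α
      = a • ∑ p : ι × κ, vecMulVec ((K p.1)ᴴ *ᵥ w p.2) (star ((K p.1)ᴴ *ᵥ w p.2)) := by
  simp only [Matrix.mul_smul, Matrix.smul_mul, Matrix.mul_sum, Matrix.sum_mul,
    conjTranspose_mul_vecMulVec_mul, ← Finset.smul_sum, Fintype.sum_prod_type]

theorem Matrix.PosSemidef.of_isHermitian_of_isIdempotentElem [CommRing R] [PartialOrder R]
    [StarRing R] [StarOrderedRing R] {P : Matrix n n R} (hH : P.IsHermitian)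
    (hP : IsIdempotentElem P) : P.PosSemidef := by
  simpa [hH.eq, hP.eq] using posSemidef_conjTranspose_mul_self P

end KrausConjugation

section StrictlyIncoherent

variable {d : ℕ}

theorem sioKraus_conjTranspose_mul_mul_apply (f : Equiv.Perm (Fin d)) (c : Fin d → ℂ)
    (B : Matrix (Fin d) (Fin d) ℂ) (x y : Fin d) :
    ((sioKraus f c)ᴴ * B * sioKraus f c) x y = star (c x) * B (f x) (f y) * c y := by
  simp [Matrix.mul_apply, sioKraus, Matrix.conjTranspose_apply, ite_mul, mul_ite,
    apply_ite (starRingEnd ℂ), Finset.sum_ite_eq']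

theorem sioKraus_conjTranspose_mulVec_apply (f : Equiv.Perm (Fin d)) (c : Fin d → ℂ)
    (u : Fin d → ℂ) (x : Fin d) :
    ((sioKraus f c)ᴴ *ᵥ u) x = star (c x) * u (f x) := by
  simp [Matrix.mulVec, dotProduct, sioKraus, Matrix.conjTranspose_apply,
    apply_ite (starRingEnd ℂ), Finset.sum_ite_eq', mul_comm]

theorem card_support_sioKraus_conjTranspose_mulVec_le (f : Equiv.Perm (Fin d))
    (c : Fin d → ℂ) (u : Fin d → ℂ) :
    #{x | ((sioKraus f c)ᴴ *ᵥ u) x ≠ 0} ≤ #{x | u x ≠ 0} := by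
  calc #{x | ((sioKraus f c)ᴴ *ᵥ u) x ≠ 0}
      ≤ #(({x | u x ≠ 0} : Finset (Fin d)).map f.symm.toEmbedding) := by
        refine card_le_card fun x hx => ?_
        simp only [mem_filter, mem_univ, true_and, sioKraus_conjTranspose_mulVec_apply] at hx
        exact mem_map.mpr ⟨f x, by simpa using right_ne_zero_of_mul hx, by simp⟩
    _ = #{x | u x ≠ 0} := card_map _

theorem sum_sioKraus_conjTranspose_mul_mul_apply_self {ι : Type*} [Fintype ι]
    (f : ι → Equiv.Perm (Fin d)) (c : ι → Fin d → ℂ)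
    (hTP : ∑ α, (sioKraus (f α) (c α))ᴴ * sioKraus (f α) (c α) = 1)
    {B : Matrix (Fin d) (Fin d) ℂ} {b : ℂ} (hB : ∀ i, B i i = b) (y : Fin d) :
    (∑ α, (sioKraus (f α) (c α))ᴴ * B * sioKraus (f α) (c α)) y y = b := by
  have hy := congr_fun₂ hTP y y
  have hdiag : ∀ α, ((sioKraus (f α) (c α))ᴴ * sioKraus (f α) (c α)) y y
      = star (c α y) * c α y := fun α => by
    simpa using sioKraus_conjTranspose_mul_mul_apply (f α) (c α) 1 y y
  simp only [Matrix.sum_apply, hdiag, one_apply_eq] at hy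
  simp only [Matrix.sum_apply, sioKraus_conjTranspose_mul_mul_apply, hB]
  calc ∑ α, star (c α y) * b * c α y = b * ∑ α, star (c α y) * c α y := by
        rw [Finset.mul_sum]; exact Finset.sum_congr rfl fun α _ => by ring
    _ = b := by rw [hy, mul_one]

end StrictlyIncoherent

section CoherentTarget

variable {d M : ℕ}

def headIndicator (d M : ℕ) : Fin d → ℂ := fun i => if i.val < M then 1 else 0

def tailProj (d M : ℕ) : Matrix (Fin d) (Fin d) ℂ :=
  diagonal fun i => if M ≤ i.val then 1 else 0

theorem PsiM_eq_smul_vecMulVec :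
    PsiM d M = (1 / M : ℂ) • vecMulVec (headIndicator d M) (star (headIndicator d M)) := by
  ext i j
  by_cases hi : i.val < M <;> by_cases hj : j.val < M <;>
    simp [PsiM, headIndicator, vecMulVec_apply, hi, hj]

theorem PiGtM_eq_smul_tailProj : PiGtM d M = (1 / M : ℂ) • tailProj d M := by
  ext i j
  by_cases h : i = j
  · subst h; by_cases hi : M ≤ i.val <;> simp [PiGtM, tailProj, hi]
  · simp [PiGtM, tailProj, h]

theorem star_headIndicator_dotProduct (hMd : M ≤ d) :
    star (headIndicator d M) ⬝ᵥ headIndicator d M = M := by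
  simp [dotProduct, headIndicator, ← ite_and, sum_boole, Fin.card_filter_val_lt, hMd]

theorem posSemidef_PsiM : (PsiM d M).PosSemidef := by
  rw [PsiM_eq_smul_vecMulVec]
  exact (posSemidef_vecMulVec_self_star _).smul (by positivity)

theorem posSemidef_tailProj : (tailProj d M).PosSemidef :=
  PosSemidef.diagonal fun i => by dsimp only; split_ifs <;> simp

theorem isIdempotentElem_PsiM (hMd : M ≤ d) : IsIdempotentElem (PsiM d M) := by
  have h : (1 / M : ℂ) * (1 / M) * M = 1 / M := by
    rcases eq_or_ne (M : ℂ) 0 with hM | hM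
    · simp [hM]
    · field_simp
  rw [IsIdempotentElem, PsiM_eq_smul_vecMulVec, smul_mul_smul, vecMulVec_mul_vecMulVec,
    star_headIndicator_dotProduct hMd, vecMulVec_smul, smul_smul, h]

theorem isIdempotentElem_tailProj : IsIdempotentElem (tailProj d M) := by
  rw [IsIdempotentElem, tailProj, diagonal_mul_diagonal]
  congr 1; ext i; split_ifs <;> simp

theorem PsiM_mul_tailProj : PsiM d M * tailProj d M = 0 := by
  ext i j
  by_cases hj : j.val < M <;> simp [PsiM, tailProj, mul_diagonal, hj]

theorem tailProj_mul_PsiM : tailProj d M * PsiM d M = 0 := by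
  ext i j
  by_cases hi : i.val < M <;> simp [PsiM, tailProj, diagonal_mul, hi]

theorem posSemidef_one_sub_PsiM_add_PiGtM (hMd : M ≤ d) :
    (1 - (PsiM d M + PiGtM d M)).PosSemidef := by
  have hproj : IsIdempotentElem (1 - (PsiM d M + tailProj d M)) :=
    ((isIdempotentElem_PsiM hMd).add isIdempotentElem_tailProj
      (by rw [PsiM_mul_tailProj, tailProj_mul_PsiM, add_zero])).one_sub
  have hherm : (1 - (PsiM d M + tailProj d M)).IsHermitian :=
    isHermitian_one.sub (posSemidef_PsiM.isHermitian.add posSemidef_tailProj.isHermitian)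
  have hcoef : (0 : ℂ) ≤ 1 - 1 / M := by
    rw [sub_nonneg]
    rcases Nat.eq_zero_or_pos M with h | h
    · simp [h]
    · rw [div_le_one (by exact_mod_cast h)]; exact_mod_cast h
  have hsplit : 1 - (PsiM d M + PiGtM d M)
      = (1 - (PsiM d M + tailProj d M)) + (1 - 1 / M : ℂ) • tailProj d M := by
    rw [PiGtM_eq_smul_tailProj]; module
  rw [hsplit]
  exact (PosSemidef.of_isHermitian_of_isIdempotentElem hherm hproj).add
    (posSemidef_tailProj.smul hcoef)

theorem PsiM_add_PiGtM_apply_self (i : Fin d) : (PsiM d M + PiGtM d M) i i = 1 / M := by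
  by_cases hi : i.val < M <;> simp [PsiM, PiGtM, hi, Nat.not_le.mpr, Nat.le_of_not_lt]

def coherentVectors (d M : ℕ) : Option (Fin d) → Fin d → ℂ
  | none => headIndicator d M
  | some x => Pi.single x (if M ≤ x.val then 1 else 0)

theorem tailProj_eq_sum_vecMulVec :
    tailProj d M = ∑ x, vecMulVec (coherentVectors d M (some x))
      (star (coherentVectors d M (some x))) := by
  ext i j
  rw [Matrix.sum_apply]
  by_cases h : i = j
  · subst h
    by_cases hi : M ≤ i.val <;>
      simp [tailProj, coherentVectors, vecMulVec_apply, Pi.single_apply, hi]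
  · simp [tailProj, coherentVectors, vecMulVec_apply, Pi.single_apply, h]

theorem PsiM_add_PiGtM_eq_smul_sum_vecMulVec :
    PsiM d M + PiGtM d M
      = (1 / M : ℂ) • ∑ o, vecMulVec (coherentVectors d M o) (star (coherentVectors d M o)) := by
  rw [Fintype.sum_option, smul_add, PsiM_eq_smul_vecMulVec, PiGtM_eq_smul_tailProj,
    tailProj_eq_sum_vecMulVec]
  rfl

theorem card_support_coherentVectors_le (hM : 0 < M) (o : Option (Fin d)) :
    #{x | coherentVectors d M o x ≠ 0} ≤ M := by
  cases o with
  | none =>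
    calc #{x | coherentVectors d M none x ≠ 0} = #{x : Fin d | x < M} := by
          simp [coherentVectors, headIndicator]
      _ ≤ M := Fin.card_filter_val_lt.trans_le (min_le_right _ _)
  | some y =>
    refine (card_le_one.mpr fun a ha b hb => ?_).trans hM
    simp_all [coherentVectors, Pi.single_apply]

end CoherentTarget

theorem stmt_8 (d M : ℕ) (hM : 0 < M) (hMd : M ≤ d)
    (ι : Type) [Fintype ι] (f : ι → Equiv.Perm (Fin d)) (c : ι → Fin d → ℂ)
    (hTP : ∑ α : ι, (sioKraus (f α) (c α))ᴴ * sioKraus (f α) (c α) = 1)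
    (A : Matrix (Fin d) (Fin d) ℂ)
    (hA : A = ∑ α : ι,
      (sioKraus (f α) (c α))ᴴ * (PsiM d M + PiGtM d M) * sioKraus (f α) (c α)) :
    (A.PosSemidef ∧ ((1 : Matrix (Fin d) (Fin d) ℂ) - A).PosSemidef)
    ∧ (∀ y : Fin d, A y y = (1 : ℂ) / M)
    ∧ (∃ (m : ℕ) (φ : Fin m → Fin d → ℂ),
        A = ((1 : ℂ) / M) • ∑ j : Fin m, Matrix.vecMulVec (φ j) (star (φ j))
        ∧ ∀ j : Fin m, (Finset.univ.filter fun x => φ j x ≠ 0).card ≤ M) := by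
  set φ : ι × Option (Fin d) → Fin d → ℂ :=
    fun p => (sioKraus (f p.1) (c p.1))ᴴ *ᵥ coherentVectors d M p.2
  have hAφ : A = (1 / M : ℂ) • ∑ p, vecMulVec (φ p) (star (φ p)) := by
    rw [hA, PsiM_add_PiGtM_eq_smul_sum_vecMulVec,
      sum_conjTranspose_mul_smul_sum_vecMulVec_mul]
  refine ⟨⟨?_, ?_⟩, fun y => ?_, ?_⟩
  · rw [hAφ]
    exact (posSemidef_sum _ fun p _ => posSemidef_vecMulVec_self_star (φ p)).smul
      (by positivity)
  · rw [hA, one_sub_sum_conjTranspose_mul_mul _ hTP]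
    exact posSemidef_sum _ fun α _ =>
      (posSemidef_one_sub_PsiM_add_PiGtM hMd).conjTranspose_mul_mul_same _
  · rw [hA]
    exact sum_sioKraus_conjTranspose_mul_mul_apply_self f c hTP PsiM_add_PiGtM_apply_self y
  · let e := Fintype.equivFin (ι × Option (Fin d))
    refine ⟨_, φ ∘ e.symm, ?_, fun j => ?_⟩
    · rw [hAφ, ← e.symm.sum_comp]
      rfl
    · exact (card_support_sioKraus_conjTranspose_mulVec_le _ _ _).trans
        (card_support_coherentVectors_le hM _)
end

section
/- Let $0 \leq A \leq \mathbb{1}$ on $\mathbb{C}^d$ with $A_{xx} = 1/M$ for all $x$, and suppose $A = \frac{1}{M}\sum_\alpha |\phi_\alpha\rangle\langle\phi_\alpha|$ where each $|\phi_\alpha\rangle$ is supported on at most $M$ computational basis elements. Then there exist permutations $f_\alpha$ of $\{1,\dots,d\}$ and coefficients such that the Kraus operators $K_\alpha = \sum_x c^*_{\alpha,x}|f_\alpha(x)\rangle\langle x|$ (with $|\phi_\alpha\rangle = \sum_x c_{\alpha,x}|x\rangle$, and $f_\alpha(x) \in \{1,\dots,M\}$ whenever $c_{\alpha,x}\neq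 0$) satisfy $\sum_\alpha K_\alpha^\dagger K_\alpha = \mathbb{1}$ and $\sum_\alpha K_\alpha^\dagger \Psi_M K_\alpha = A$. -/
open Matrix ComplexOrder

lemma perm_into (d M : ℕ) (hMd : M ≤ d) (S : Finset (Fin d)) (hS : S.card ≤ M) :
    ∃ f : Equiv.Perm (Fin d), ∀ x ∈ S, (f x).val < M := by
  classical
  set T : Finset (Fin d) := Finset.univ.filter (fun x => x.val < M) with hTdef
  have hMT : M ≤ T.card := by
    have hsub : Finset.univ.map (Fin.castLEEmb hMd) ⊆ T := by
      intro x hx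
      simp only [Finset.mem_map, Finset.mem_univ, true_and] at hx
      obtain ⟨y, rfl⟩ := hx
      simp [hTdef, y.isLt]
    calc M = (Finset.univ.map (Fin.castLEEmb hMd)).card := by simp
      _ ≤ T.card := Finset.card_le_card hsub
  obtain ⟨S', hS'T, hS'card⟩ := Finset.exists_subset_card_eq (le_trans hS hMT)
  have e1 : {x // x ∈ S} ≃ {x // x ∈ S'} := Finset.equivOfCardEq hS'card.symm
  have e2 : {x // ¬ x ∈ S} ≃ {x // ¬ x ∈ S'} := by
    refine (Equiv.subtypeEquivRight ?_).trans
      ((Finset.equivOfCardEq (s := Sᶜ) (t := S'ᶜ) ?_).trans (Equiv.subtypeEquivRight ?_))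
    · intro x; simp [Finset.mem_compl]
    · simp [Finset.card_compl, hS'card]
    · intro x; simp [Finset.mem_compl]
  refine ⟨Equiv.subtypeCongr e1 e2, ?_⟩
  intro x hx
  have happ : Equiv.subtypeCongr e1 e2 x = (e1 ⟨x, hx⟩ : Fin d) := by
    simp [Equiv.subtypeCongr, hx]
  rw [happ]
  have := hS'T (e1 ⟨x, hx⟩).2
  simpa [hTdef] using this

/-- Kraus operator `K_α = ∑_x c*_{α,x} |f_α(x)⟩⟨x|` built from a vector `φ_α` and a
permutation `f_α`. -/
noncomputable def krausOf {d : ℕ} (f : Equiv.Perm (Fin d)) (φ : Fin d → ℂ) :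
    Matrix (Fin d) (Fin d) ℂ :=
  Matrix.of fun i j => if i = f j then star (φ j) else 0

theorem stmt_9 (d M : ℕ) (hM : 0 < M) (hMd : M ≤ d)
    (A : Matrix (Fin d) (Fin d) ℂ)
    (hA : A.PosSemidef) (hA1 : ((1 : Matrix (Fin d) (Fin d) ℂ) - A).PosSemidef)
    (hdiag : ∀ x : Fin d, A x x = (1 : ℂ) / M)
    (m : ℕ) (φ : Fin m → Fin d → ℂ)
    (hdecomp : A = ((1 : ℂ) / M) • ∑ α : Fin m, Matrix.vecMulVec (φ α) (star (φ α)))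
    (hsupp : ∀ α : Fin m, (Finset.univ.filter fun x => φ α x ≠ 0).card ≤ M) :
    ∃ f : Fin m → Equiv.Perm (Fin d),
      (∀ α x, φ α x ≠ 0 → ((f α) x).val < M)
      ∧ ∑ α : Fin m, (krausOf (f α) (φ α))ᴴ * krausOf (f α) (φ α) = 1
      ∧ ∑ α : Fin m, (krausOf (f α) (φ α))ᴴ * PsiM d M * krausOf (f α) (φ α) = A := by
  classical
  choose f hf using fun α =>
    perm_into d M hMd (Finset.univ.filter fun x => φ α x ≠ 0) (hsupp α)
  have hfM : ∀ α x, φ α x ≠ 0 → ((f α) x).val < M := fun α x hx =>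
    hf α x (by simp [hx])
  have hMne : ((1 : ℂ)/M) ≠ 0 := by
    have : (M : ℂ) ≠ 0 := Nat.cast_ne_zero.mpr hM.ne'
    simp [this]
  have hdiagsum : ∀ x : Fin d, ∑ α, φ α x * star (φ α x) = 1 := by
    intro x
    have h := hdiag x
    rw [hdecomp] at h
    simp only [Matrix.smul_apply, Matrix.sum_apply, Matrix.vecMulVec_apply,
      Pi.star_apply, smul_eq_mul] at h
    exact mul_left_cancel₀ hMne (h.trans (mul_one ((1:ℂ)/M)).symm)
  refine ⟨f, hfM, ?_, ?_⟩
  · ext x y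
    simp only [Matrix.sum_apply, Matrix.mul_apply, krausOf, conjTranspose_apply,
      Matrix.of_apply]
    have key : ∀ α : Fin m,
        (∑ i, star (if i = f α x then star (φ α x) else 0) *
          (if i = f α y then star (φ α y) else 0))
        = if x = y then φ α x * star (φ α x) else 0 := by
      intro α
      rw [Finset.sum_eq_single (f α x)]
      · by_cases h : x = y
        · subst h; simp
        · have hne : f α x ≠ f α y := fun hc => h (Equiv.injective _ hc)
          simp [hne, h]
      · intro i _ hi; simp [hi]
      · simp
    simp_rw [key]
    by_cases hxy : x = y
    · subst hxy
      rw [Matrix.one_apply_eq]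
      simpa using hdiagsum x
    · simp [hxy, Matrix.one_apply_ne hxy]
  · ext x y
    simp only [Matrix.sum_apply, Matrix.mul_apply, krausOf, conjTranspose_apply,
      Matrix.of_apply]
    have key : ∀ α : Fin m,
        (∑ j, (∑ i, star (if i = f α x then star (φ α x) else 0) * PsiM d M i j) *
          (if j = f α y then star (φ α y) else 0))
        = ((1:ℂ)/M) * (φ α x * star (φ α y)) := by
      intro α
      rw [Finset.sum_eq_single (f α y)]
      · rw [Finset.sum_eq_single (f α x)]
        · by_cases hx : φ α x = 0
          · simp [hx]
          · by_cases hy : φ α y = 0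
            · simp [hy]
            · rw [show PsiM d M (f α x) (f α y) = (1:ℂ)/M by
                simp [PsiM, hfM α x hx, hfM α y hy]]
              simp only [if_true, star_star]
              ring
        · intro i _ hi; simp [hi]
        · simp
      · intro j _ hj; simp [hj]
      · simp
    simp_rw [key]
    rw [hdecomp]
    simp only [Matrix.smul_apply, Matrix.sum_apply, Matrix.vecMulVec_apply,
      Pi.star_apply, smul_eq_mul]
    rw [Finset.mul_sum]
end

section
/- Let $\rho = \frac{1}{2}(|+\rangle\langle+| \otimes |+\rangle\langle+| + |-\rangle\langle-| \otimes |\widetilde{+}\rangle\langle\widetilde{+}|)$ on $\mathbb{C}^2 \otimes \mathbb{C}^2$, where $|\pm\rangle = \frac{1}{\sqrt 2}(|0\rangle \pm |1\rangle)$ and $|\widetilde{+}\rangle = \frac{1}{\sqrt 2}(|0\rangle + i|1\rangle)$. For every $n \geq 1$ and every unit vector $|\psi\rangle \in \mathbb{C}^{4^n}$ that is a linear combination of at most two computational basis vectors, one has $\langle\psi|\rho^{\otimes n}|\psi\rangle \leq \frac{1}{4^n}\left(1 + \frac{\sqrt 2}{2}\right)$. -/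
open Matrix

noncomputable def plusV : Fin 2 → ℂ := fun _ => 1 / Real.sqrt 2

noncomputable def minusV : Fin 2 → ℂ :=
  fun x => if x = 0 then 1 / Real.sqrt 2 else -(1 / Real.sqrt 2)

noncomputable def tplusV : Fin 2 → ℂ :=
  fun x => if x = 0 then 1 / Real.sqrt 2 else Complex.I / Real.sqrt 2

/-- The state `ρ = ½(|+⟩⟨+|⊗|+⟩⟨+| + |-⟩⟨-|⊗|+̃⟩⟨+̃|)`. -/
noncomputable def boundState : Matrix (Fin 2 × Fin 2) (Fin 2 × Fin 2) ℂ :=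
  ((1 : ℂ) / 2) •
    (Matrix.vecMulVec (fun x => plusV x.1 * plusV x.2)
        (star fun x : Fin 2 × Fin 2 => plusV x.1 * plusV x.2)
      + Matrix.vecMulVec (fun x => minusV x.1 * tplusV x.2)
        (star fun x : Fin 2 × Fin 2 => minusV x.1 * tplusV x.2))

/-- `ρ^{⊗n}` as a matrix indexed by `n`-tuples of basis labels. -/
noncomputable def boundStatePow (n : ℕ) :
    Matrix (Fin n → Fin 2 × Fin 2) (Fin n → Fin 2 × Fin 2) ℂ :=
  Matrix.of fun v w => ∏ k : Fin n, boundState (v k) (w k)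

/-!
Both pure states of the ensemble have amplitudes of modulus `1/2`, the second with a phase
`ε x ∈ {±1, ±i}`, so `ρ x y = (1 + ε x · conj (ε y)) / 8`. Hence every entry of `ρ` has modulus at
most `1/4`, and an off-diagonal one at most `√2/8`, because then `Re (ε x · conj (ε y)) ≤ 0`.
Taking products, the entries of `ρ^{⊗n}` are bounded by `D = 4⁻ⁿ` on the diagonal and by
`O = 4⁻ⁿ · √2/2` off it. For `ψ` supported on `s` points, bounding the quadratic form entrywise
and applying Cauchy–Schwarz to `(∑ |ψ v|)²` gives `⟨ψ, Mψ⟩ ≤ (D + (s - 1) O) ‖ψ‖²`.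
-/

section QuadraticForm

variable {ι : Type*} [Fintype ι]

theorem re_star_dotProduct_mulVec_le (M : Matrix ι ι ℂ) (ψ : ι → ℂ) :
    (star ψ ⬝ᵥ M *ᵥ ψ).re ≤ ∑ v, ∑ w, ‖ψ v‖ * ‖M v w‖ * ‖ψ w‖ := by
  simp only [dotProduct, mulVec, Finset.mul_sum, Complex.re_sum]
  gcongr with v _ w _
  calc _ ≤ ‖star ψ v * (M v w * ψ w)‖ := Complex.re_le_norm _
    _ = _ := by rw [norm_mul, norm_mul, Pi.star_apply, norm_star, mul_assoc]

theorem sq_sum_norm_le_card_support_mul (ψ : ι → ℂ) :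
    (∑ v, ‖ψ v‖) ^ 2 ≤ (Finset.univ.filter fun v => ψ v ≠ 0).card * ∑ v, ‖ψ v‖ ^ 2 := by
  rw [← Finset.sum_filter_of_ne (f := fun v => ‖ψ v‖) (p := fun v => ψ v ≠ 0) (by simp),
    ← Finset.sum_filter_of_ne (f := fun v => ‖ψ v‖ ^ 2) (p := fun v => ψ v ≠ 0) (by simp)]
  exact sq_sum_le_card_mul_sum_sq

theorem re_star_dotProduct_mulVec_le_of_norm_le [DecidableEq ι] (M : Matrix ι ι ℂ)
    (ψ : ι → ℂ) {D O : ℝ} (hD : ∀ v, ‖M v v‖ ≤ D) (hO : ∀ v w, v ≠ w → ‖M v w‖ ≤ O)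
    (hO0 : 0 ≤ O) :
    (star ψ ⬝ᵥ M *ᵥ ψ).re ≤
      (D + ((Finset.univ.filter fun v => ψ v ≠ 0).card - 1) * O) * ∑ v, ‖ψ v‖ ^ 2 := by
  have hM : ∀ v w, ‖M v w‖ ≤ O + if v = w then D - O else 0 := by
    intro v w
    split_ifs with h
    · subst h; linarith [hD v]
    · linarith [hO v w h]
  calc (star ψ ⬝ᵥ M *ᵥ ψ).re ≤ ∑ v, ∑ w, ‖ψ v‖ * ‖M v w‖ * ‖ψ w‖ :=
        re_star_dotProduct_mulVec_le M ψ
    _ ≤ ∑ v, ∑ w, ‖ψ v‖ * (O + if v = w then D - O else 0) * ‖ψ w‖ := by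
        gcongr with v _ w _; exact hM v w
    _ = ∑ v, (O * ‖ψ v‖ * ∑ w, ‖ψ w‖ + (D - O) * ‖ψ v‖ ^ 2) := by
        refine Finset.sum_congr rfl fun v _ => ?_
        simp only [mul_add, add_mul, Finset.sum_add_distrib, mul_ite, ite_mul, mul_zero,
          zero_mul, Finset.sum_ite_eq, Finset.mem_univ, if_true, Finset.mul_sum]
        congr 1
        · exact Finset.sum_congr rfl fun w _ => by ring
        · ring
    _ = O * (∑ v, ‖ψ v‖) ^ 2 + (D - O) * ∑ v, ‖ψ v‖ ^ 2 := by
        rw [Finset.sum_add_distrib, ← Finset.sum_mul, ← Finset.mul_sum, ← Finset.mul_sum, sq,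
          mul_assoc]
    _ ≤ _ := by
        nlinarith [mul_le_mul_of_nonneg_left (sq_sum_norm_le_card_support_mul ψ) hO0]

end QuadraticForm

theorem Finset.prod_le_mul_prod_of_le_mul {ι R : Type*} [CommSemiring R] [PartialOrder R]
    [IsOrderedRing R] [DecidableEq ι] {s : Finset ι} {f g : ι → R} {k : ι} {c : R}
    (hf : ∀ i ∈ s, 0 ≤ f i) (hfg : ∀ i ∈ s, f i ≤ g i) (hks : k ∈ s) (hk : f k ≤ c * g k) :
    ∏ i ∈ s, f i ≤ c * ∏ i ∈ s, g i := by
  rw [← Finset.mul_prod_erase s f hks, ← Finset.mul_prod_erase s g hks, ← mul_assoc]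
  exact mul_le_mul hk
    (Finset.prod_le_prod (fun i hi => hf i (Finset.mem_of_mem_erase hi))
      fun i hi => hfg i (Finset.mem_of_mem_erase hi))
    (Finset.prod_nonneg fun i hi => hf i (Finset.mem_of_mem_erase hi))
    ((hf k hks).trans hk)

theorem Complex.norm_one_add_le_sqrt_two {u : ℂ} (hu : ‖u‖ = 1) (hre : u.re ≤ 0) :
    ‖1 + u‖ ≤ Real.sqrt 2 := by
  have hnorm : u.re * u.re + u.im * u.im = 1 := by
    rw [← Complex.normSq_apply, Complex.normSq_eq_norm_sq, hu, one_pow]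
  rw [Complex.norm_def]
  apply Real.sqrt_le_sqrt
  simp only [Complex.normSq_apply, Complex.add_re, Complex.add_im, Complex.one_re,
    Complex.one_im]
  nlinarith

/-- The phase `ε`: twice the amplitude of `|−⟩|+̃⟩`. -/
def minusTPlusPhase (x : Fin 2 × Fin 2) : ℂ :=
  (if x.1 = 0 then 1 else -1) * (if x.2 = 0 then 1 else Complex.I)

theorem ofReal_sqrt_two_sq : ((Real.sqrt 2 : ℝ) : ℂ) ^ 2 = 2 := by
  rw [← Complex.ofReal_pow, Real.sq_sqrt zero_le_two, Complex.ofReal_ofNat]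

theorem plusV_mul_plusV (a b : Fin 2) : plusV a * plusV b = 1 / 2 := by
  simp only [plusV, ← sq, div_pow, one_pow, ofReal_sqrt_two_sq]

theorem minusV_mul_tplusV (x : Fin 2 × Fin 2) :
    minusV x.1 * tplusV x.2 = minusTPlusPhase x / 2 := by
  obtain ⟨a, b⟩ := x
  fin_cases a <;> fin_cases b <;>
    simp [minusV, tplusV, minusTPlusPhase] <;> field_simp <;> simp [ofReal_sqrt_two_sq]

theorem norm_minusTPlusPhase (x : Fin 2 × Fin 2) : ‖minusTPlusPhase x‖ = 1 := by
  simp only [minusTPlusPhase]; split_ifs <;> simp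

theorem re_minusTPlusPhase_mul_star_nonpos {x y : Fin 2 × Fin 2} (h : x ≠ y) :
    (minusTPlusPhase x * star (minusTPlusPhase y)).re ≤ 0 := by
  obtain ⟨a, b⟩ := x; obtain ⟨c, d⟩ := y
  fin_cases a <;> fin_cases b <;> fin_cases c <;> fin_cases d <;> simp_all [minusTPlusPhase]

theorem boundState_apply (x y : Fin 2 × Fin 2) :
    boundState x y = (1 + minusTPlusPhase x * star (minusTPlusPhase y)) / 8 := by
  simp only [boundState, Matrix.smul_apply, Matrix.add_apply, vecMulVec_apply, Pi.star_apply,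
    plusV_mul_plusV, minusV_mul_tplusV, star_div₀, smul_eq_mul, star_one, star_ofNat]
  ring

theorem norm_boundState_le (x y : Fin 2 × Fin 2) : ‖boundState x y‖ ≤ 1 / 4 := by
  have h := norm_add_le 1 (minusTPlusPhase x * star (minusTPlusPhase y))
  rw [norm_mul, norm_star, norm_minusTPlusPhase, norm_minusTPlusPhase, norm_one] at h
  rw [boundState_apply, norm_div, Complex.norm_ofNat]
  linarith

theorem norm_boundState_le_of_ne {x y : Fin 2 × Fin 2} (hxy : x ≠ y) :
    ‖boundState x y‖ ≤ Real.sqrt 2 / 2 * (1 / 4) := by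
  have h := Complex.norm_one_add_le_sqrt_two
    (by rw [norm_mul, norm_star, norm_minusTPlusPhase, norm_minusTPlusPhase, one_mul])
    (re_minusTPlusPhase_mul_star_nonpos hxy)
  rw [boundState_apply, norm_div, Complex.norm_ofNat]
  linarith

theorem norm_boundStatePow_apply (n : ℕ) (v w : Fin n → Fin 2 × Fin 2) :
    ‖boundStatePow n v w‖ = ∏ k, ‖boundState (v k) (w k)‖ := by
  rw [boundStatePow, of_apply, norm_prod]

theorem norm_boundStatePow_le (n : ℕ) (v w : Fin n → Fin 2 × Fin 2) :
    ‖boundStatePow n v w‖ ≤ (1 / 4) ^ n := by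
  rw [norm_boundStatePow_apply, ← Fin.prod_const]
  exact Finset.prod_le_prod (fun _ _ => norm_nonneg _) fun k _ => norm_boundState_le (v k) (w k)

theorem norm_boundStatePow_le_of_ne (n : ℕ) {v w : Fin n → Fin 2 × Fin 2} (hvw : v ≠ w) :
    ‖boundStatePow n v w‖ ≤ (1 / 4) ^ n * (Real.sqrt 2 / 2) := by
  obtain ⟨k, hk⟩ := Function.ne_iff.mp hvw
  rw [norm_boundStatePow_apply, mul_comm, ← Fin.prod_const]
  exact Finset.prod_le_mul_prod_of_le_mul (fun _ _ => norm_nonneg _)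
    (fun j _ => norm_boundState_le (v j) (w j)) (Finset.mem_univ k) (norm_boundState_le_of_ne hk)

theorem stmt_12_general (n : ℕ) (ψ : (Fin n → Fin 2 × Fin 2) → ℂ)
    (hunit : ∑ v, ‖ψ v‖ ^ 2 = 1)
    (hsupp : (Finset.univ.filter fun v => ψ v ≠ 0).card ≤ 2) :
    (star ψ ⬝ᵥ (boundStatePow n) *ᵥ ψ).re
      ≤ 1 / 4 ^ n * (1 + Real.sqrt 2 / 2) := by
  have hO : (0 : ℝ) ≤ (1 / 4) ^ n * (Real.sqrt 2 / 2) := by positivity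
  have hcard : ((Finset.univ.filter fun v => ψ v ≠ 0).card : ℝ) ≤ 2 := by exact_mod_cast hsupp
  calc (star ψ ⬝ᵥ (boundStatePow n) *ᵥ ψ).re
      ≤ ((1 / 4) ^ n + ((Finset.univ.filter fun v => ψ v ≠ 0).card - 1) *
          ((1 / 4) ^ n * (Real.sqrt 2 / 2))) * ∑ v, ‖ψ v‖ ^ 2 :=
        re_star_dotProduct_mulVec_le_of_norm_le _ ψ (fun v => norm_boundStatePow_le n v v)
          (fun _ _ => norm_boundStatePow_le_of_ne n) hO
    _ ≤ (1 / 4) ^ n + (1 / 4) ^ n * (Real.sqrt 2 / 2) := by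
        rw [hunit, mul_one]; nlinarith
    _ = 1 / 4 ^ n * (1 + Real.sqrt 2 / 2) := by rw [div_pow, one_pow]; ring

theorem stmt_12 (n : ℕ) (hn : 1 ≤ n) (ψ : (Fin n → Fin 2 × Fin 2) → ℂ)
    (hunit : ∑ v, ‖ψ v‖ ^ 2 = 1)
    (hsupp : (Finset.univ.filter fun v => ψ v ≠ 0).card ≤ 2) :
    (star ψ ⬝ᵥ (boundStatePow n) *ᵥ ψ).re
      ≤ 1 / 4 ^ n * (1 + Real.sqrt 2 / 2) :=
  stmt_12_general n ψ hunit hsupp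
end
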